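/- arXiv:1904.08588 — 3 statements merged into one kernel-verified Lean document; each statement's English description precedes it below -/
import Mathlib

section
/- Let m ≥ 2 be an integer and let p₁ be an integer satisfying p₁ ≥ 1 if m is even, and p₁ ≥ 0 if m is odd. Then, as rational numbers, m(m−1)/2 − ((⌊m/2⌋ − 1)(m − ⌊m/2⌋) + 1 − p₁) > m(m−1)/4, where ⌊m/2⌋ denotes the integer part of m/2. -/
/-- The key arithmetic estimate `𝒟_min > m(m−1)/4`: for an integer `m ≥ 2` and an integer
`p₁` with `p₁ ≥ 1` if `m` is even and `p₁ ≥ 0` if `m` is odd, one has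
`m(m−1)/2 − ((⌊m/2⌋ − 1)(m − ⌊m/2⌋) + 1 − p₁) > m(m−1)/4` in `ℚ`. -/
theorem Dmin_gt_quarter (m : ℕ) (hm : 2 ≤ m) (p₁ : ℤ)
    (hpeven : Even m → 1 ≤ p₁) (hpodd : Odd m → 0 ≤ p₁) :
    (m : ℚ) * ((m : ℚ) - 1) / 2
        - ((((m / 2 : ℕ) : ℚ) - 1) * ((m : ℚ) - ((m / 2 : ℕ) : ℚ)) + 1 - (p₁ : ℚ))
      > (m : ℚ) * ((m : ℚ) - 1) / 4 := by
  rcases Nat.even_or_odd m with he | ho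
  · obtain ⟨k, hk⟩ := he
    have hp := hpeven ⟨k, hk⟩
    have hk1 : 1 ≤ k := by omega
    have h2 : m / 2 = k := by omega
    subst hk
    rw [h2]
    have hkQ : (1 : ℚ) ≤ (k : ℚ) := by exact_mod_cast hk1
    have hpQ : (1 : ℚ) ≤ (p₁ : ℚ) := by exact_mod_cast hp
    push_cast
    nlinarith [sq_nonneg ((k : ℚ) - 1)]
  · obtain ⟨k, hk⟩ := ho
    have hp := hpodd ⟨k, hk⟩
    have hk1 : 1 ≤ k := by omega
    have h2 : m / 2 = k := by omega
    subst hk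
    rw [h2]
    have hkQ : (1 : ℚ) ≤ (k : ℚ) := by exact_mod_cast hk1
    have hpQ : (0 : ℚ) ≤ (p₁ : ℚ) := by exact_mod_cast hp
    push_cast
    nlinarith [sq_nonneg ((k : ℚ) - 1)]
end

section
/- Let f = x^11 + y^11 + x^6·y^6, regarded as an element of ℂ⟦x,y⟧. Then the Tjurina number of f at the origin equals 84, i.e., dim_ℂ ℂ⟦x,y⟧/(f, ∂f/∂x, ∂f/∂y) = 84. -/
noncomputable section

/-- Formal partial derivative `∂f/∂xᵢ` of a formal power series in two variables:
the coefficient of `x^d` in `∂f/∂xᵢ` is `(dᵢ + 1)` times the coefficient of `x^(d + eᵢ)` in `f`. -/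
def pder (i : Fin 2) (f : MvPowerSeries (Fin 2) ℂ) : MvPowerSeries (Fin 2) ℂ :=
  fun d => ((d i : ℂ) + 1) * MvPowerSeries.coeff (d + Finsupp.single i 1) f

/-- The Jacobian ideal `(∂f/∂x, ∂f/∂y)` of `f ∈ ℂ⟦x,y⟧`. -/
def milnorIdeal (f : MvPowerSeries (Fin 2) ℂ) : Ideal (MvPowerSeries (Fin 2) ℂ) :=
  Ideal.span {pder 0 f, pder 1 f}

/-- The Tjurina ideal `(f, ∂f/∂x, ∂f/∂y)` of `f ∈ ℂ⟦x,y⟧`. -/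
def tjurinaIdeal (f : MvPowerSeries (Fin 2) ℂ) : Ideal (MvPowerSeries (Fin 2) ℂ) :=
  Ideal.span {f, pder 0 f, pder 1 f}

/-- The Milnor number `μ(f) = dim_ℂ ℂ⟦x,y⟧/(∂f/∂x, ∂f/∂y)`. -/
def milnor (f : MvPowerSeries (Fin 2) ℂ) : ℕ :=
  Module.finrank ℂ (MvPowerSeries (Fin 2) ℂ ⧸ milnorIdeal f)

/-- The Tjurina number `τ(f) = dim_ℂ ℂ⟦x,y⟧/(f, ∂f/∂x, ∂f/∂y)`. -/
def tjurina (f : MvPowerSeries (Fin 2) ℂ) : ℕ :=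
  Module.finrank ℂ (MvPowerSeries (Fin 2) ℂ ⧸ tjurinaIdeal f)

/-- The substitution `f(x,y) ↦ f(x, x·y)` on `ℂ⟦x,y⟧`: the monomial `x^p y^q` is sent to
`x^(p+q) y^q`, so the coefficient of `x^a y^b` in the result is the coefficient of
`x^(a-b) y^b` in `f` when `b ≤ a`, and `0` otherwise. -/
def substXY (f : MvPowerSeries (Fin 2) ℂ) : MvPowerSeries (Fin 2) ℂ :=
  fun d => if d 1 ≤ d 0 then
      MvPowerSeries.coeff (Finsupp.single 0 (d 0 - d 1) + Finsupp.single 1 (d 1)) f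
    else 0

/-- The natural inclusion `ℂ⟦x⟧ → ℂ⟦x,y⟧` (series in the first variable only). -/
def ofX (a : PowerSeries ℂ) : MvPowerSeries (Fin 2) ℂ :=
  fun d => if d 1 = 0 then PowerSeries.coeff (d 0) a else 0

/-- `f ∈ ℂ⟦x,y⟧` has order (multiplicity at the origin) exactly `m`: all terms of total
degree `< m` vanish and some term of total degree `m` is nonzero. -/
def hasMult (f : MvPowerSeries (Fin 2) ℂ) (m : ℕ) : Prop :=
  (∀ d : Fin 2 →₀ ℕ, (d.sum fun _ n => n) < m → MvPowerSeries.coeff d f = 0) ∧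
    ∃ d : Fin 2 →₀ ℕ, (d.sum fun _ n => n) = m ∧ MvPowerSeries.coeff d f ≠ 0

/-! The Tjurina ideal `J = (f, f_x, f_y)` contains `x f_x + y f_y - 11 f = x^6 y^6`, hence
`x^11`, `y^11`, and then `x^10 y^4`, `x^4 y^10`; moreover `y^j f_x` gives
`x^10 y^j ≡ -(6/11) x^5 y^(j+6)` and symmetrically. So modulo `J` every power series reduces to a
combination of the 84 monomials `x^a y^b` with `a, b ≤ 10`, not both `≥ 6`, and not of the form
`x^10 y^(≤5)` or `x^(≤5) y^10`. The coefficients of this reduction are linear functionals that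
vanish on `J` and are dual to these monomials, so the monomials form a basis of `ℂ⟦x,y⟧ ⧸ J`. -/

open MvPowerSeries

theorem Submodule.finrank_quotient_eq_card {K M ι : Type*} [Field K] [AddCommGroup M]
    [Module K M] [Fintype ι] [DecidableEq ι] {N : Submodule K M} {v : ι → M}
    {Φ : M →ₗ[K] ι → K} (hN : N ≤ LinearMap.ker Φ) (hv : ∀ i, Φ (v i) = Pi.single i 1)
    (hspan : N ⊔ span K (Set.range v) = ⊤) :
    Module.finrank K (M ⧸ N) = Fintype.card ι := by
  have hΦ_sum (c : ι → K) : Φ (∑ i, c i • v i) = c := by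
    simp only [map_sum, map_smul, hv, ← pi_eq_sum_univ']
  have hker : LinearMap.ker Φ = N := by
    refine le_antisymm (fun u hu => ?_) hN
    obtain ⟨n, hn, s, hs, rfl⟩ := mem_sup.1 (hspan ▸ mem_top : u ∈ N ⊔ span K (Set.range v))
    obtain ⟨c, rfl⟩ := (mem_span_range_iff_exists_fun K).1 hs
    have hc : c = 0 := by
      rw [LinearMap.mem_ker, map_add, hN hn, zero_add, hΦ_sum] at hu
      exact hu
    simpa [hc] using hn
  have hsurj : Function.Surjective Φ := fun c => ⟨_, hΦ_sum c⟩
  rw [← hker, (Φ.quotKerEquivOfSurjective hsurj).finrank_eq, Module.finrank_fintype_fun_eq_card]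

theorem MvPowerSeries.mem_span_X_pow_pair_of_coeff_eq_zero {σ R : Type*} [CommRing R]
    (i j : σ) (k l : ℕ) {φ : MvPowerSeries σ R}
    (hφ : ∀ m : σ →₀ ℕ, m i < k → m j < l → coeff m φ = 0) :
    φ ∈ Ideal.span {X i ^ k, X j ^ l} := by
  classical
  let ψ : MvPowerSeries σ R := fun m => if m i < k then coeff m φ else 0
  have hψ (m : σ →₀ ℕ) : coeff m ψ = if m i < k then coeff m φ else 0 := rfl
  obtain ⟨a, ha⟩ : X i ^ k ∣ φ - ψ := X_pow_dvd_iff.2 fun m hm => by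
    rw [map_sub, hψ, if_pos hm, sub_self]
  obtain ⟨b, hb⟩ : X j ^ l ∣ ψ := X_pow_dvd_iff.2 fun m hm => by
    rw [hψ]; split_ifs with h
    · exact hφ m h hm
    · rfl
  exact Ideal.mem_span_pair.2 ⟨a, b, by rw [mul_comm a, mul_comm b, ← ha, ← hb, sub_add_cancel]⟩

theorem MvPowerSeries.coe_mem_of_forall_monomial_mem {σ R : Type*} [CommSemiring R]
    {W : Submodule R (MvPowerSeries σ R)} (hW : ∀ d, monomial d 1 ∈ W) (p : MvPolynomial σ R) :
    (p : MvPowerSeries σ R) ∈ W := by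
  induction p using MvPolynomial.induction_on' with
  | monomial d a =>
    rw [MvPolynomial.coe_monomial, ← mul_one a, ← smul_eq_mul, map_smul]
    exact W.smul_mem a (hW d)
  | add p q hp hq => rw [MvPolynomial.coe_add]; exact W.add_mem hp hq

theorem Ideal.pow_mul_pow_mem_of_le {A : Type*} [CommSemiring A] {I : Ideal A} {x y : A}
    {p q a b : ℕ} (h : x ^ p * y ^ q ∈ I) (hp : p ≤ a) (hq : q ≤ b) : x ^ a * y ^ b ∈ I := by
  rw [← Nat.add_sub_cancel' hp, ← Nat.add_sub_cancel' hq, pow_add, pow_add]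
  convert I.mul_mem_left (x ^ (a - p) * y ^ (b - q)) h using 1
  ring

theorem MvPowerSeries.coeff_ofNat_mul {σ R : Type*} [Semiring R] (n : ℕ) [n.AtLeastTwo]
    (d : σ →₀ ℕ) (φ : MvPowerSeries σ R) :
    coeff d ((ofNat(n) : MvPowerSeries σ R) * φ) = ofNat(n) * coeff d φ := by
  rw [← map_ofNat C n, coeff_C_mul]

theorem pder_add (i : Fin 2) (f g : MvPowerSeries (Fin 2) ℂ) :
    pder i (f + g) = pder i f + pder i g :=
  funext fun _ => mul_add _ _ _

theorem pder_monomial (i : Fin 2) (e : Fin 2 →₀ ℕ) (c : ℂ) :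
    pder i (monomial e c) = monomial (e - Finsupp.single i 1) (e i * c) := by
  classical
  ext d
  change ((d i : ℂ) + 1) * coeff (d + Finsupp.single i 1) (monomial e c) = _
  rw [coeff_monomial, coeff_monomial]
  by_cases h : d + Finsupp.single i 1 = e
  · subst h; simp
  · rw [if_neg h, mul_zero]
    split_ifs with hd
    · have hei : e i = 0 := by
        by_contra hei
        refine h (hd ▸ tsub_add_cancel_of_le ?_)
        rw [Finsupp.single_le_iff]; omega
      simp [hei]
    · rfl

namespace TjurinaX11Y11X6Y6

open Submodule

local notation "R2" => MvPowerSeries (Fin 2) ℂ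

def xyExp (a b : ℕ) : Fin 2 →₀ ℕ := Finsupp.single 0 a + Finsupp.single 1 b

@[simp] theorem xyExp_apply_zero (a b : ℕ) : xyExp a b 0 = a := by simp [xyExp]

@[simp] theorem xyExp_apply_one (a b : ℕ) : xyExp a b 1 = b := by simp [xyExp]

theorem eq_xyExp (d : Fin 2 →₀ ℕ) : d = xyExp (d 0) (d 1) := by
  ext i; fin_cases i <;> simp

theorem xyExp_le_xyExp {a b p q : ℕ} : xyExp p q ≤ xyExp a b ↔ p ≤ a ∧ q ≤ b := by
  rw [Finsupp.le_def, Fin.forall_fin_two]; simp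

theorem xyExp_inj {a b p q : ℕ} : xyExp a b = xyExp p q ↔ a = p ∧ b = q := by
  rw [Finsupp.ext_iff, Fin.forall_fin_two]; simp

theorem xyExp_sub (a b p q : ℕ) : xyExp a b - xyExp p q = xyExp (a - p) (b - q) := by
  ext i; fin_cases i <;> simp

theorem single_zero_one_eq : (Finsupp.single 0 1 : Fin 2 →₀ ℕ) = xyExp 1 0 := by simp [xyExp]

theorem single_one_one_eq : (Finsupp.single 1 1 : Fin 2 →₀ ℕ) = xyExp 0 1 := by simp [xyExp]

theorem X_pow_mul_X_pow (a b : ℕ) : (X 0 ^ a * X 1 ^ b : R2) = monomial (xyExp a b) 1 := by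
  rw [X_pow_eq, X_pow_eq, monomial_mul_monomial, one_mul, xyExp]

theorem coeff_mul_X_pow_mul_X_pow (v : R2) (a b p q : ℕ) :
    coeff (xyExp a b) (v * (X 0 ^ p * X 1 ^ q)) =
      if p ≤ a ∧ q ≤ b then coeff (xyExp (a - p) (b - q)) v else 0 := by
  simp only [X_pow_mul_X_pow, coeff_mul_monomial, xyExp_le_xyExp, xyExp_sub, mul_one]

theorem coeff_X_pow_mul_X_pow (a b p q : ℕ) :
    coeff (xyExp a b) (X 0 ^ p * X 1 ^ q : R2) = if a = p ∧ b = q then 1 else 0 := by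
  classical
  rw [X_pow_mul_X_pow, coeff_monomial]; simp only [xyExp_inj]

theorem monomial_xyExp (a b : ℕ) (c : ℂ) :
    monomial (xyExp a b) c = C c * (X 0 ^ a * X 1 ^ b : R2) := by
  rw [X_pow_mul_X_pow, ← monomial_zero_eq_C_apply, monomial_mul_monomial, zero_add, mul_one]

def f₀ : R2 := X 0 ^ 11 + X 1 ^ 11 + X 0 ^ 6 * X 1 ^ 6

local notation "J" => tjurinaIdeal f₀

theorem f₀_eq_sum_monomial :
    f₀ = monomial (xyExp 11 0) 1 + monomial (xyExp 0 11) 1 + monomial (xyExp 6 6) 1 := by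
  simp only [monomial_xyExp, map_one, one_mul, pow_zero, mul_one, f₀]

theorem pder_zero_f₀ : pder 0 f₀ = 11 * X 0 ^ 10 + 6 * (X 0 ^ 5 * X 1 ^ 6) := by
  rw [f₀_eq_sum_monomial, pder_add, pder_add, pder_monomial, pder_monomial, pder_monomial,
    single_zero_one_eq, xyExp_sub, xyExp_sub, xyExp_sub]
  norm_num [monomial_xyExp, map_ofNat]

theorem pder_one_f₀ : pder 1 f₀ = 11 * X 1 ^ 10 + 6 * (X 0 ^ 6 * X 1 ^ 5) := by
  rw [f₀_eq_sum_monomial, pder_add, pder_add, pder_monomial, pder_monomial, pder_monomial,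
    single_one_one_eq, xyExp_sub, xyExp_sub, xyExp_sub]
  norm_num [monomial_xyExp, map_ofNat]

theorem isUnit_eleven : IsUnit (11 : R2) := by
  rw [isUnit_iff_constantCoeff, map_ofNat]
  exact isUnit_iff_ne_zero.2 (by norm_num)

theorem X_pow_mul_X_pow_mem_tjurinaIdeal {a b : ℕ}
    (h : 11 ≤ a ∨ 11 ≤ b ∨ (6 ≤ a ∧ 6 ≤ b) ∨ (10 ≤ a ∧ 4 ≤ b) ∨ (4 ≤ a ∧ 10 ≤ b)) :
    (X 0 ^ a * X 1 ^ b : R2) ∈ J := by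
  have hf : f₀ ∈ J := Ideal.subset_span (by simp)
  have hfx : (11 * X 0 ^ 10 + 6 * (X 0 ^ 5 * X 1 ^ 6) : R2) ∈ J :=
    pder_zero_f₀ ▸ Ideal.subset_span (by simp)
  have hfy : (11 * X 1 ^ 10 + 6 * (X 0 ^ 6 * X 1 ^ 5) : R2) ∈ J :=
    pder_one_f₀ ▸ Ideal.subset_span (by simp)
  have of_eleven_mul (u : R2) : 11 * u ∈ J → u ∈ J :=
    (Ideal.unit_mul_mem_iff_mem _ isUnit_eleven).1
  have h66 : (X 0 ^ 6 * X 1 ^ 6 : R2) ∈ J := by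
    convert sub_mem (add_mem (Ideal.mul_mem_left _ (X 0) hfx) (Ideal.mul_mem_left _ (X 1) hfy))
      (Ideal.mul_mem_left _ 11 hf) using 1
    simp only [f₀]; ring
  have h11_0 : (X 0 ^ 11 * X 1 ^ 0 : R2) ∈ J := of_eleven_mul _ <| by
    convert sub_mem (Ideal.mul_mem_left _ (X 0) hfx) (Ideal.mul_mem_left _ 6 h66) using 1; ring
  have h0_11 : (X 0 ^ 0 * X 1 ^ 11 : R2) ∈ J := of_eleven_mul _ <| by
    convert sub_mem (Ideal.mul_mem_left _ (X 1) hfy) (Ideal.mul_mem_left _ 6 h66) using 1; ring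
  have h5_10 : (X 0 ^ 5 * X 1 ^ 10 : R2) ∈ J := of_eleven_mul _ <| by
    convert sub_mem (Ideal.mul_mem_left _ (X 0 ^ 5) hfy) (Ideal.mul_mem_left _ (6 * X 1 ^ 5) h11_0)
      using 1; ring
  have h10_5 : (X 0 ^ 10 * X 1 ^ 5 : R2) ∈ J := of_eleven_mul _ <| by
    convert sub_mem (Ideal.mul_mem_left _ (X 1 ^ 5) hfx) (Ideal.mul_mem_left _ (6 * X 0 ^ 5) h0_11)
      using 1; ring
  have h10_4 : (X 0 ^ 10 * X 1 ^ 4 : R2) ∈ J := of_eleven_mul _ <| by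
    convert sub_mem (Ideal.mul_mem_left _ (X 1 ^ 4) hfx) (Ideal.mul_mem_left _ 6 h5_10)
      using 1; ring
  have h4_10 : (X 0 ^ 4 * X 1 ^ 10 : R2) ∈ J := of_eleven_mul _ <| by
    convert sub_mem (Ideal.mul_mem_left _ (X 0 ^ 4) hfy) (Ideal.mul_mem_left _ 6 h10_5)
      using 1; ring
  rcases h with h | h | ⟨ha, hb⟩ | ⟨ha, hb⟩ | ⟨ha, hb⟩
  · exact Ideal.pow_mul_pow_mem_of_le h11_0 h (Nat.zero_le b)
  · exact Ideal.pow_mul_pow_mem_of_le h0_11 (Nat.zero_le a) h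
  · exact Ideal.pow_mul_pow_mem_of_le h66 ha hb
  · exact Ideal.pow_mul_pow_mem_of_le h10_4 ha hb
  · exact Ideal.pow_mul_pow_mem_of_le h4_10 ha hb

def basisExps : Finset (ℕ × ℕ) :=
  (Finset.range 11 ×ˢ Finset.range 11).filter fun p =>
    ¬(6 ≤ p.1 ∧ 6 ≤ p.2) ∧ ¬(p.1 = 10 ∧ p.2 ≤ 5) ∧ ¬(p.2 = 10 ∧ p.1 ≤ 5)

theorem mem_basisExps {a b : ℕ} : (a, b) ∈ basisExps ↔
    a ≤ 10 ∧ b ≤ 10 ∧ ¬(6 ≤ a ∧ 6 ≤ b) ∧ ¬(a = 10 ∧ b ≤ 5) ∧ ¬(b = 10 ∧ a ≤ 5) := by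
  simp only [basisExps, Finset.mem_filter, Finset.mem_product, Finset.mem_range]
  omega

theorem card_basisExps : basisExps.card = 84 := by decide

def basisMonomial (p : basisExps) : R2 := X 0 ^ p.1.1 * X 1 ^ p.1.2

theorem X_pow_mul_X_pow_mem_sup_span (a b : ℕ) :
    (X 0 ^ a * X 1 ^ b : R2) ∈ restrictScalars ℂ J ⊔ span ℂ (Set.range basisMonomial) := by
  set W := restrictScalars ℂ J ⊔ span ℂ (Set.range basisMonomial)
  have hJW (u : R2) (hu : u ∈ J) : u ∈ W := mem_sup_left hu
  have hBW (p : basisExps) : basisMonomial p ∈ W := mem_sup_right (subset_span ⟨p, rfl⟩)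
  by_cases hB : (a, b) ∈ basisExps
  · exact hBW ⟨_, hB⟩
  by_cases hJ : 11 ≤ a ∨ 11 ≤ b ∨ (6 ≤ a ∧ 6 ≤ b) ∨ (10 ≤ a ∧ 4 ≤ b) ∨ (4 ≤ a ∧ 10 ≤ b)
  · exact hJW _ (X_pow_mul_X_pow_mem_tjurinaIdeal hJ)
  rw [mem_basisExps] at hB
  rw [← smul_mem_iff _ (by norm_num : (11 : ℂ) ≠ 0), Algebra.smul_def, map_ofNat]
  obtain ⟨rfl, hb⟩ | ⟨rfl, ha⟩ : (a = 10 ∧ b ≤ 3) ∨ (b = 10 ∧ a ≤ 3) := by omega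
  · have hfx : X 1 ^ b * pder 0 f₀ ∈ J := Ideal.mul_mem_left _ _ (Ideal.subset_span (by simp))
    have hB : (5, b + 6) ∈ basisExps := mem_basisExps.2 (by omega)
    convert W.sub_mem (hJW _ hfx) (W.smul_mem (6 : ℂ) (hBW ⟨_, hB⟩)) using 1
    rw [pder_zero_f₀, basisMonomial, Algebra.smul_def, map_ofNat]; ring
  · have hfy : X 0 ^ a * pder 1 f₀ ∈ J := Ideal.mul_mem_left _ _ (Ideal.subset_span (by simp))
    have hB : (a + 6, 5) ∈ basisExps := mem_basisExps.2 (by omega)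
    convert W.sub_mem (hJW _ hfy) (W.smul_mem (6 : ℂ) (hBW ⟨_, hB⟩)) using 1
    rw [pder_one_f₀, basisMonomial, Algebra.smul_def, map_ofNat]; ring

theorem sup_span_basisMonomial_eq_top :
    restrictScalars ℂ J ⊔ span ℂ (Set.range basisMonomial) = ⊤ := by
  set W := restrictScalars ℂ J ⊔ span ℂ (Set.range basisMonomial)
  refine eq_top_iff'.2 fun u => ?_
  have htrunc : (trunc' ℂ (xyExp 10 10) u : R2) ∈ W :=
    coe_mem_of_forall_monomial_mem (fun d => by
      rw [eq_xyExp d, ← X_pow_mul_X_pow]; exact X_pow_mul_X_pow_mem_sup_span _ _) _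
  have hspan : Ideal.span {X 0 ^ 11, X 1 ^ 11} ≤ J := by
    rw [Ideal.span_le, Set.insert_subset_iff, Set.singleton_subset_iff]
    exact ⟨by simpa using X_pow_mul_X_pow_mem_tjurinaIdeal (a := 11) (b := 0) (by omega),
      by simpa using X_pow_mul_X_pow_mem_tjurinaIdeal (a := 0) (b := 11) (by omega)⟩
  have hrest : u - trunc' ℂ (xyExp 10 10) u ∈ J :=
    hspan <| mem_span_X_pow_pair_of_coeff_eq_zero 0 1 11 11 fun m h0 h1 => by
      rw [map_sub, MvPolynomial.coeff_coe, coeff_trunc', if_pos, sub_self]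
      rw [eq_xyExp m, xyExp_le_xyExp]; omega
  simpa using W.add_mem (mem_sup_left hrest) htrunc

/-- Since `x^10 y^j ≡ -(6/11) x^5 y^(j+6)` modulo `J`, the coefficient of `x^10 y^j` is
transferred to `x^5 y^(j+6)`; symmetrically in `x` and `y`. -/
def normalFormCoeff (p : ℕ × ℕ) : R2 →ₗ[ℂ] ℂ :=
  coeff (xyExp p.1 p.2) - (6 / 11 : ℂ) •
    ((if p.1 = 5 ∧ 6 ≤ p.2 then coeff (xyExp 10 (p.2 - 6)) else 0) +
      (if p.2 = 5 ∧ 6 ≤ p.1 then coeff (xyExp (p.1 - 6) 10) else 0))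

theorem normalFormCoeff_apply (a b : ℕ) (u : R2) :
    normalFormCoeff (a, b) u = coeff (xyExp a b) u - 6 / 11 *
      ((if a = 5 ∧ 6 ≤ b then coeff (xyExp 10 (b - 6)) u else 0) +
        (if b = 5 ∧ 6 ≤ a then coeff (xyExp (a - 6) 10) u else 0)) := by
  simp only [normalFormCoeff, LinearMap.sub_apply, LinearMap.smul_apply, LinearMap.add_apply,
    smul_eq_mul]
  split_ifs <;> rfl

theorem normalFormCoeff_basisMonomial {p q : basisExps} :
    normalFormCoeff p (basisMonomial q) = if p = q then 1 else 0 := by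
  obtain ⟨⟨a, b⟩, hab⟩ := p
  obtain ⟨⟨c, d⟩, hcd⟩ := q
  rw [mem_basisExps] at hab hcd
  simp (disch := omega) only [normalFormCoeff_apply, coeff_X_pow_mul_X_pow, Prod.mk.injEq,
    if_neg, ite_self, add_zero, mul_zero, sub_zero, basisMonomial, Subtype.mk.injEq]

theorem normalFormCoeff_mul_eq_zero {a b : ℕ} (hab : (a, b) ∈ basisExps) (v : R2) {g : R2}
    (hg : g ∈ ({f₀, pder 0 f₀, pder 1 f₀} : Set R2)) : normalFormCoeff (a, b) (v * g) = 0 := by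
  rw [mem_basisExps] at hab
  have hf : v * f₀ =
      v * (X 0 ^ 11 * X 1 ^ 0) + v * (X 0 ^ 0 * X 1 ^ 11) + v * (X 0 ^ 6 * X 1 ^ 6) := by
    rw [f₀]; ring
  have hfx : v * pder 0 f₀ = 11 * (v * (X 0 ^ 10 * X 1 ^ 0)) + 6 * (v * (X 0 ^ 5 * X 1 ^ 6)) := by
    rw [pder_zero_f₀]; ring
  have hfy : v * pder 1 f₀ = 11 * (v * (X 0 ^ 0 * X 1 ^ 10)) + 6 * (v * (X 0 ^ 6 * X 1 ^ 5)) := by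
    rw [pder_one_f₀]; ring
  rcases hg with rfl | rfl | rfl <;> [rw [hf]; rw [hfx]; rw [hfy]]
  all_goals
    obtain ⟨rfl, hb⟩ | ⟨rfl, ha⟩ | ⟨h₁, h₂⟩ :
      (a = 5 ∧ 6 ≤ b) ∨ (b = 5 ∧ 6 ≤ a) ∨ (¬(a = 5 ∧ 6 ≤ b) ∧ ¬(b = 5 ∧ 6 ≤ a)) := by omega
    all_goals
      simp (disch := omega) only [normalFormCoeff_apply, coeff_ofNat_mul, map_add,
        coeff_mul_X_pow_mul_X_pow, if_pos, if_neg, true_and, Nat.sub_zero, Nat.sub_self]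
      ring

def normalFormMap : R2 →ₗ[ℂ] basisExps → ℂ := LinearMap.pi fun p => normalFormCoeff p

theorem normalFormMap_basisMonomial (q : basisExps) :
    normalFormMap (basisMonomial q) = Pi.single q 1 := by
  ext p
  rw [normalFormMap, LinearMap.pi_apply, normalFormCoeff_basisMonomial, Pi.single_apply]

theorem restrictScalars_tjurinaIdeal_le_ker :
    restrictScalars ℂ J ≤ LinearMap.ker normalFormMap := by
  intro u hu
  obtain ⟨a, z, hz, rfl⟩ := Ideal.mem_span_insert.1 hu
  obtain ⟨b, c, rfl⟩ := Ideal.mem_span_pair.1 hz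
  ext ⟨⟨m, n⟩, hp⟩
  simp only [normalFormMap, LinearMap.pi_apply, map_add, Pi.zero_apply,
    normalFormCoeff_mul_eq_zero hp _ (by simp : f₀ ∈ _),
    normalFormCoeff_mul_eq_zero hp _ (by simp : pder 0 f₀ ∈ _),
    normalFormCoeff_mul_eq_zero hp _ (by simp : pder 1 f₀ ∈ _), add_zero]

end TjurinaX11Y11X6Y6

/-- The Tjurina number of `f = x^11 + y^11 + x^6 y^6` at the origin equals 84:
`dim_ℂ ℂ⟦x,y⟧/(f, ∂f/∂x, ∂f/∂y) = 84`. -/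
theorem tjurina_example_x11_y11_x6y6 :
    tjurina ((MvPowerSeries.X 0) ^ 11 + (MvPowerSeries.X 1) ^ 11
      + (MvPowerSeries.X 0) ^ 6 * (MvPowerSeries.X 1) ^ 6 : MvPowerSeries (Fin 2) ℂ)
      = 84 := by
  rw [tjurina, ← (Submodule.Quotient.restrictScalarsEquiv ℂ _).finrank_eq,
    ← TjurinaX11Y11X6Y6.card_basisExps, ← Fintype.card_coe]
  exact Submodule.finrank_quotient_eq_card
    TjurinaX11Y11X6Y6.restrictScalars_tjurinaIdeal_le_ker
    TjurinaX11Y11X6Y6.normalFormMap_basisMonomial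
    TjurinaX11Y11X6Y6.sup_span_basisMonomial_eq_top
end
end

section
/- Let f = x^11 + y^10 + x^6·y^6, regarded as an element of ℂ⟦x,y⟧. Then the Tjurina number of f at the origin equals 78, i.e., dim_ℂ ℂ⟦x,y⟧/(f, ∂f/∂x, ∂f/∂y) = 78. -/
noncomputable section

/-!
Up to units, the partial derivatives of `f` are `g₁ = x^10 + 6/11 x^5 y^6` and
`g₂ = y^9 + 3/5 x^6 y^5`, and the Euler-type combination `5/8 x f_x + 11/16 y f_y - 55/8 f` is
`g₃ = x^6 y^6`, so the Tjurina ideal is `(g₁, g₂, g₃)`. Modulo it, the rules `x^10 ↦ -6/11 x^5 y^6`,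
`y^9 ↦ -3/5 x^6 y^5` and `x^6 y^6 ↦ 0` rewrite every monomial into the span of the 78 standard
monomials `x^a y^b` with `a ≤ 9`, `b ≤ 8` and `a ≤ 5 ∨ b ≤ 5`; they also kill `x^15` and `y^14`,
so every power series is congruent to a polynomial, and the standard monomials span the quotient.
They are independent because, for each standard exponent, the coefficient of that monomial
corrected by the one-step rewrites landing on it is a linear functional that vanishes on the
ideal and is dual to the standard monomials.
-/

open MvPowerSeries Finset

theorem Ideal.finrank_quotient_eq_card_of_dual {K R ι : Type*} [Field K] [CommRing R]
    [Algebra K R] [Fintype ι] [DecidableEq ι] (I : Ideal R) (e : ι → R) (φ : ι → R →ₗ[K] K)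
    (hspan : ∀ g : R, Ideal.Quotient.mk I g ∈
      Submodule.span K (Set.range fun i => Ideal.Quotient.mk I (e i)))
    (hφ : ∀ i, ∀ g ∈ I, φ i g = 0) (hdual : ∀ i j, φ i (e j) = if i = j then 1 else 0) :
    Module.finrank K (R ⧸ I) = Fintype.card ι := by
  set π := Ideal.Quotient.mkₐ K I
  have hli : LinearIndependent K fun i => π (e i) := by
    rw [Fintype.linearIndependent_iff]
    intro c hc i
    have hmem : ∑ j, c j • e j ∈ I := by
      rw [← Ideal.Quotient.eq_zero_iff_mem, ← Ideal.Quotient.mkₐ_eq_mk K, map_sum]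
      simpa only [map_smul] using hc
    simpa [hdual] using hφ i _ hmem
  have htop : Submodule.span K (Set.range fun i => π (e i)) = ⊤ := by
    rw [eq_top_iff]
    rintro q -
    obtain ⟨g, rfl⟩ := Ideal.Quotient.mk_surjective q
    exact hspan g
  rw [linearIndependent_iff_card_eq_finrank_span, Set.finrank, htop, finrank_top] at hli
  exact hli.symm

def bideg (a b : ℕ) : Fin 2 →₀ ℕ := Finsupp.single 0 a + Finsupp.single 1 b

@[simp] lemma bideg_apply_zero (a b : ℕ) : bideg a b 0 = a := by simp [bideg]

@[simp] lemma bideg_apply_one (a b : ℕ) : bideg a b 1 = b := by simp [bideg]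

lemma eq_bideg_iff {m : Fin 2 →₀ ℕ} {a b : ℕ} : m = bideg a b ↔ m 0 = a ∧ m 1 = b := by
  constructor
  · rintro rfl
    simp
  · rintro ⟨h₀, h₁⟩
    ext i
    fin_cases i <;> simpa

@[simp] lemma bideg_inj {a b c d : ℕ} : bideg a b = bideg c d ↔ a = c ∧ b = d := by
  simp [eq_bideg_iff]

lemma bideg_le_iff {m : Fin 2 →₀ ℕ} {a b : ℕ} : bideg a b ≤ m ↔ a ≤ m 0 ∧ b ≤ m 1 := by
  simp [Finsupp.le_def, Fin.forall_fin_two]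

@[simp] lemma bideg_sub_bideg (a b i j : ℕ) :
    bideg a b - bideg i j = bideg (a - i) (b - j) := by
  ext k
  fin_cases k <;> simp [bideg]

section CommSemiring
variable {R : Type*} [CommSemiring R]

lemma monomial_bideg (a b : ℕ) (c : R) :
    (monomial (bideg a b) c : MvPowerSeries (Fin 2) R) = c • (X 0 ^ a * X 1 ^ b) := by
  rw [X_pow_eq, X_pow_eq, monomial_mul_monomial, mul_one, ← map_smul, smul_eq_mul, mul_one, bideg]

lemma monomial_one_eq_X_pow_mul_X_pow (m : Fin 2 →₀ ℕ) :
    (monomial m 1 : MvPowerSeries (Fin 2) R) = X 0 ^ m 0 * X 1 ^ m 1 := by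
  rw [← one_smul R (X 0 ^ m 0 * X 1 ^ m 1), ← monomial_bideg, ← eq_bideg_iff.mpr ⟨rfl, rfl⟩]

lemma coeff_bideg_mul_monomial (u : MvPowerSeries (Fin 2) R) (a b i j : ℕ) (c : R) :
    coeff (bideg a b) (u * monomial (bideg i j) c) =
      if i ≤ a ∧ j ≤ b then coeff (bideg (a - i) (b - j)) u * c else 0 := by
  simp only [coeff_mul_monomial, bideg_le_iff, bideg_apply_zero, bideg_apply_one, bideg_sub_bideg]

end CommSemiring

section CommRing
variable {R : Type*} [CommRing R] {I : Ideal (MvPowerSeries (Fin 2) R)} {A B : ℕ}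

lemma sub_trunc_mem_of_X_pow_mem (hA : X 0 ^ A ∈ I) (hB : X 1 ^ B ∈ I)
    (g : MvPowerSeries (Fin 2) R) :
    g - (trunc R (bideg A B) g : MvPowerSeries (Fin 2) R) ∈ I := by
  set r := g - (trunc R (bideg A B) g : MvPowerSeries (Fin 2) R)
  have hr (m : Fin 2 →₀ ℕ) (hm₀ : m 0 < A) (hm₁ : m 1 < B) : coeff m r = 0 := by
    have hlt : m < bideg A B := by
      refine lt_of_le_of_ne ?_ fun h => ?_
      · simp only [Finsupp.le_def, Fin.forall_fin_two, bideg_apply_zero, bideg_apply_one]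
        omega
      · have := eq_bideg_iff.mp h
        omega
    simp [r, MvPolynomial.coeff_coe, coeff_trunc, hlt]
  let r₀ : MvPowerSeries (Fin 2) R := fun m => if A ≤ m 0 then coeff m r else 0
  have h₀ : X 0 ^ A ∣ r₀ := X_pow_dvd_iff.mpr fun m hm => if_neg (by omega)
  have h₁ : X 1 ^ B ∣ r - r₀ := X_pow_dvd_iff.mpr fun m hm => by
    show coeff m r - (if A ≤ m 0 then coeff m r else 0) = 0
    split_ifs with h
    · exact sub_self _
    · rw [hr m (by omega) hm, sub_zero]
  rw [← add_sub_cancel r₀ r]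
  exact add_mem (I.mem_of_dvd h₀ hA) (I.mem_of_dvd h₁ hB)

lemma mk_mem_span_X_pow_mul_X_pow (hA : X 0 ^ A ∈ I) (hB : X 1 ^ B ∈ I)
    (g : MvPowerSeries (Fin 2) R) : Ideal.Quotient.mk I g ∈ Submodule.span R
      (Set.range fun p : ℕ × ℕ => Ideal.Quotient.mk I (X 0 ^ p.1 * X 1 ^ p.2)) := by
  rw [Ideal.Quotient.eq.mpr (sub_trunc_mem_of_X_pow_mem hA hB g), trunc, truncFinset_apply,
    ← MvPolynomial.coeToMvPowerSeries.ringHom_apply, map_sum, map_sum]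
  refine Submodule.sum_mem _ fun m _ => ?_
  have hm : monomial m (coeff m g) = coeff m g • (X 0 ^ m 0 * X 1 ^ m 1) := by
    rw [← monomial_one_eq_X_pow_mul_X_pow, ← map_smul, smul_eq_mul, mul_one]
  rw [MvPolynomial.coeToMvPowerSeries.ringHom_apply, MvPolynomial.coe_monomial, hm,
    ← Ideal.Quotient.mkₐ_eq_mk R, map_smul]
  exact Submodule.smul_mem _ _ (Submodule.subset_span ⟨(m 0, m 1), rfl⟩)

end CommRing

lemma pder_eq_pderiv (i : Fin 2) (f : MvPowerSeries (Fin 2) ℂ) : pder i f = pderiv ℂ i f := by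
  ext d
  rw [coeff_pderiv, mul_comm]
  rfl

namespace X11Y10X6Y6

def standardExponents : Finset (ℕ × ℕ) :=
  (range 10 ×ˢ range 9).filter fun p => p.1 ≤ 5 ∨ p.2 ≤ 5

lemma mem_standardExponents {p : ℕ × ℕ} :
    p ∈ standardExponents ↔ p.1 ≤ 9 ∧ p.2 ≤ 8 ∧ (p.1 ≤ 5 ∨ p.2 ≤ 5) := by
  simp only [standardExponents, mem_filter, mem_product, mem_range]
  omega

lemma card_standardExponents : standardExponents.card = 78 := by decide

section Relations
variable {K Q : Type*} [CommRing K] [CommRing Q] [Algebra K Q] {α β : K} {x y : Q}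

lemma pow_mul_pow_eq_zero (h₁ : x ^ 10 + α • (x ^ 5 * y ^ 6) = 0)
    (h₂ : y ^ 9 + β • (x ^ 6 * y ^ 5) = 0) (h₃ : x ^ 6 * y ^ 6 = 0) {a b : ℕ}
    (hab : 6 ≤ a ∧ 6 ≤ b ∨ 10 ≤ a ∧ 3 ≤ b ∨ 4 ≤ a ∧ 9 ≤ b ∨ 15 ≤ a ∨ 14 ≤ b) :
    x ^ a * y ^ b = 0 := by
  rw [Algebra.smul_def] at h₁ h₂
  set A := algebraMap K Q α
  set B := algebraMap K Q β
  -- x^10 y^3 ↦ x^5 y^9 ↦ x^11 y^5 ↦ x^6 y^11 = 0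
  have h₄ : x ^ 10 * y ^ 3 = 0 := by
    linear_combination (y ^ 3 + A * B * x * y ^ 5) * h₁ - A * x ^ 5 * h₂ - A ^ 2 * B * y ^ 5 * h₃
  have h₅ : x ^ 4 * y ^ 9 = 0 := by linear_combination x ^ 4 * h₂ - B * y ^ 2 * h₄
  have h₆ : x ^ 15 * y ^ 0 = 0 := by linear_combination x ^ 5 * h₁ - A * y ^ 3 * h₄
  have h₇ : x ^ 0 * y ^ 14 = 0 := by linear_combination y ^ 5 * h₂ - B * y ^ 4 * h₃
  have of_dvd {c d : ℕ} (h : x ^ c * y ^ d = 0) (hc : c ≤ a) (hd : d ≤ b) : x ^ a * y ^ b = 0 := by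
    obtain ⟨a, rfl⟩ := Nat.exists_eq_add_of_le hc
    obtain ⟨b, rfl⟩ := Nat.exists_eq_add_of_le hd
    linear_combination x ^ a * y ^ b * h
  rcases hab with ⟨ha, hb⟩ | ⟨ha, hb⟩ | ⟨ha, hb⟩ | ha | hb
  exacts [of_dvd h₃ ha hb, of_dvd h₄ ha hb, of_dvd h₅ ha hb, of_dvd h₆ ha (Nat.zero_le _),
    of_dvd h₇ (Nat.zero_le _) hb]

variable (K x y) in
def standardSpan : Submodule K Q :=
  Submodule.span K ((fun p : ℕ × ℕ => x ^ p.1 * y ^ p.2) '' standardExponents)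

lemma pow_mul_pow_mem_standardSpan {a b : ℕ} (h : (a, b) ∈ standardExponents) :
    x ^ a * y ^ b ∈ standardSpan K x y :=
  Submodule.subset_span ⟨(a, b), h, rfl⟩

lemma mul_mem_standardSpan {z : Q}
    (hz : ∀ p ∈ standardExponents, z * (x ^ p.1 * y ^ p.2) ∈ standardSpan K x y) {v : Q}
    (hv : v ∈ standardSpan K x y) : z * v ∈ standardSpan K x y := by
  refine (Submodule.span_le (p := (standardSpan K x y).comap (LinearMap.mulLeft K z))).mpr
    ?_ hv
  rintro _ ⟨p, hp, rfl⟩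
  exact hz p hp

lemma X_mul_mem_standardSpan (h₁ : x ^ 10 + α • (x ^ 5 * y ^ 6) = 0)
    (h₂ : y ^ 9 + β • (x ^ 6 * y ^ 5) = 0) (h₃ : x ^ 6 * y ^ 6 = 0) {v : Q}
    (hv : v ∈ standardSpan K x y) : x * v ∈ standardSpan K x y := by
  refine mul_mem_standardSpan (fun ⟨a, b⟩ hp => ?_) hv
  rw [← mul_assoc, ← pow_succ']
  by_cases hs : (a + 1, b) ∈ standardExponents
  · exact pow_mul_pow_mem_standardSpan hs
  rw [mem_standardExponents] at hp hs
  by_cases hab : a = 9 ∧ b ≤ 2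
  · obtain ⟨rfl, hb⟩ := hab
    rw [eq_neg_of_add_eq_zero_left h₁, neg_mul, smul_mul_assoc, mul_assoc, ← pow_add]
    exact neg_mem (Submodule.smul_mem _ α
      (pow_mul_pow_mem_standardSpan (mem_standardExponents.mpr (by omega))))
  · rw [pow_mul_pow_eq_zero h₁ h₂ h₃ (by omega)]
    exact zero_mem _

lemma Y_mul_mem_standardSpan (h₁ : x ^ 10 + α • (x ^ 5 * y ^ 6) = 0)
    (h₂ : y ^ 9 + β • (x ^ 6 * y ^ 5) = 0) (h₃ : x ^ 6 * y ^ 6 = 0) {v : Q}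
    (hv : v ∈ standardSpan K x y) : y * v ∈ standardSpan K x y := by
  refine mul_mem_standardSpan (fun ⟨a, b⟩ hp => ?_) hv
  rw [mul_left_comm, ← pow_succ']
  by_cases hs : (a, b + 1) ∈ standardExponents
  · exact pow_mul_pow_mem_standardSpan hs
  rw [mem_standardExponents] at hp hs
  by_cases hab : b = 8 ∧ a ≤ 3
  · obtain ⟨rfl, ha⟩ := hab
    rw [eq_neg_of_add_eq_zero_left h₂, mul_neg, mul_smul_comm, ← mul_assoc, ← pow_add]
    exact neg_mem (Submodule.smul_mem _ β
      (pow_mul_pow_mem_standardSpan (mem_standardExponents.mpr (by omega))))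
  · rw [pow_mul_pow_eq_zero h₁ h₂ h₃ (by omega)]
    exact zero_mem _

theorem forall_pow_mul_pow_mem_standardSpan (h₁ : x ^ 10 + α • (x ^ 5 * y ^ 6) = 0)
    (h₂ : y ^ 9 + β • (x ^ 6 * y ^ 5) = 0) (h₃ : x ^ 6 * y ^ 6 = 0) (a b : ℕ) :
    x ^ a * y ^ b ∈ standardSpan K x y := by
  induction a with
  | zero =>
    induction b with
    | zero => exact pow_mul_pow_mem_standardSpan (by decide)
    | succ b ih =>
      simpa only [pow_zero, one_mul, pow_succ'] using Y_mul_mem_standardSpan h₁ h₂ h₃ ih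
  | succ a ih => simpa only [pow_succ', mul_assoc] using X_mul_mem_standardSpan h₁ h₂ h₃ ih

end Relations

def f : MvPowerSeries (Fin 2) ℂ := X 0 ^ 11 + X 1 ^ 10 + X 0 ^ 6 * X 1 ^ 6

def g₁ : MvPowerSeries (Fin 2) ℂ := X 0 ^ 10 + (6 / 11 : ℂ) • (X 0 ^ 5 * X 1 ^ 6)

def g₂ : MvPowerSeries (Fin 2) ℂ := X 1 ^ 9 + (3 / 5 : ℂ) • (X 0 ^ 6 * X 1 ^ 5)

def g₃ : MvPowerSeries (Fin 2) ℂ := X 0 ^ 6 * X 1 ^ 6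

lemma pder_zero_f : pder 0 f = (11 : ℂ) • g₁ := by
  simp only [f, g₁, pder_eq_pderiv, map_add, Derivation.leibniz, Derivation.leibniz_pow,
    pderiv_X_self, pderiv_X_of_ne (by decide : (1 : Fin 2) ≠ 0), smul_eq_mul, mul_one, mul_zero,
    smul_zero, add_zero, zero_add, mul_smul_comm, Nat.reduceSub]
  rw [mul_comm (X 1 ^ 6)]
  module

lemma pder_one_f : pder 1 f = (10 : ℂ) • g₂ := by
  simp only [f, g₂, pder_eq_pderiv, map_add, Derivation.leibniz, Derivation.leibniz_pow,
    pderiv_X_self, pderiv_X_of_ne (by decide : (0 : Fin 2) ≠ 1), smul_eq_mul, mul_one, mul_zero,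
    smul_zero, add_zero, zero_add, mul_smul_comm, Nat.reduceSub]
  module

lemma f_eq : f = X 0 * g₁ + X 1 * g₂ - (8 / 55 : ℂ) • g₃ := by
  simp only [f, g₁, g₂, g₃, mul_add, mul_smul_comm]
  ring_nf
  module

lemma tjurinaIdeal_f : tjurinaIdeal f = Ideal.span {g₁, g₂, g₃} := by
  have hg₁ : g₁ = (1 / 11 : ℂ) • pder 0 f := by rw [pder_zero_f, smul_smul]; norm_num
  have hg₂ : g₂ = (1 / 10 : ℂ) • pder 1 f := by rw [pder_one_f, smul_smul]; norm_num
  have hg₃ : g₃ = (55 / 8 : ℂ) • (X 0 * g₁ + X 1 * g₂ - f) := by rw [f_eq]; module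
  apply le_antisymm <;>
    simp only [tjurinaIdeal, Ideal.span_le, Set.insert_subset_iff, Set.singleton_subset_iff,
      SetLike.mem_coe]
  · refine ⟨?_, ?_, ?_⟩
    · rw [f_eq]
      refine sub_mem (add_mem (Ideal.mul_mem_left _ _ ?_) (Ideal.mul_mem_left _ _ ?_))
        (Submodule.smul_of_tower_mem _ _ ?_) <;> exact Ideal.subset_span (by simp)
    · rw [pder_zero_f]
      exact Submodule.smul_of_tower_mem _ _ (Ideal.subset_span (by simp))
    · rw [pder_one_f]
      exact Submodule.smul_of_tower_mem _ _ (Ideal.subset_span (by simp))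
  · have h₁ : g₁ ∈ tjurinaIdeal f := by
      rw [hg₁]
      exact Submodule.smul_of_tower_mem _ _ (Ideal.subset_span (by simp))
    have h₂ : g₂ ∈ tjurinaIdeal f := by
      rw [hg₂]
      exact Submodule.smul_of_tower_mem _ _ (Ideal.subset_span (by simp))
    refine ⟨h₁, h₂, ?_⟩
    rw [hg₃]
    exact Submodule.smul_of_tower_mem _ _ (sub_mem (add_mem (Ideal.mul_mem_left _ _ h₁)
      (Ideal.mul_mem_left _ _ h₂)) (Ideal.subset_span (by simp)))

lemma mk_mem_span_standard (g : MvPowerSeries (Fin 2) ℂ) :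
    Ideal.Quotient.mk (tjurinaIdeal f) g ∈ Submodule.span ℂ (Set.range fun p : standardExponents =>
      Ideal.Quotient.mk (tjurinaIdeal f) (X 0 ^ p.1.1 * X 1 ^ p.1.2)) := by
  set π := Ideal.Quotient.mkₐ ℂ (tjurinaIdeal f)
  have hπ {g} (hg : g ∈ ({g₁, g₂, g₃} : Set _)) : π g = 0 := by
    rw [Ideal.Quotient.mkₐ_eq_mk, Ideal.Quotient.eq_zero_iff_mem, tjurinaIdeal_f]
    exact Ideal.subset_span hg
  have h₁ := hπ (g := g₁) (by simp)
  have h₂ := hπ (g := g₂) (by simp)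
  have h₃ := hπ (g := g₃) (by simp)
  simp only [g₁, g₂, g₃, map_add, map_smul, map_mul, map_pow] at h₁ h₂ h₃
  have hmem {a b : ℕ} (hab : 15 ≤ a ∨ 14 ≤ b) : X 0 ^ a * X 1 ^ b ∈ tjurinaIdeal f := by
    rw [← Ideal.Quotient.eq_zero_iff_mem, ← Ideal.Quotient.mkₐ_eq_mk ℂ, map_mul, map_pow, map_pow]
    exact pow_mul_pow_eq_zero h₁ h₂ h₃ (by omega)
  have hspan := mk_mem_span_X_pow_mul_X_pow (by simpa using hmem (a := 15) (b := 0) (by omega))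
    (by simpa using hmem (a := 0) (b := 14) (by omega)) g
  refine Submodule.span_le.mpr ?_ hspan
  rintro _ ⟨⟨a, b⟩, rfl⟩
  have := forall_pow_mul_pow_mem_standardSpan h₁ h₂ h₃ a b
  rw [standardSpan, Set.image_eq_range] at this
  simp only [π, Ideal.Quotient.mkₐ_eq_mk, map_mul, map_pow] at this ⊢
  exact this

/-- The coefficient of `x^p` in the normal form: besides `x^p` itself, exactly one monomial
rewrites onto it when `p = (5, b)` with `b ≥ 6` (namely `x^10 y^(b-6)`) or `p = (a, 5)` with
`a ≥ 6` (namely `x^(a-6) y^9`). -/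
def normalCoeff (p : ℕ × ℕ) : MvPowerSeries (Fin 2) ℂ →ₗ[ℂ] ℂ :=
  if p.1 = 5 ∧ 6 ≤ p.2 then coeff (bideg 5 p.2) - (6 / 11 : ℂ) • coeff (bideg 10 (p.2 - 6))
  else if 6 ≤ p.1 ∧ p.2 = 5 then coeff (bideg p.1 5) - (3 / 5 : ℂ) • coeff (bideg (p.1 - 6) 9)
  else coeff (bideg p.1 p.2)

lemma g₁_eq_monomial : g₁ = monomial (bideg 10 0) 1 + monomial (bideg 5 6) (6 / 11 : ℂ) := by
  rw [g₁, monomial_bideg, monomial_bideg, one_smul, pow_zero, mul_one]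

lemma g₂_eq_monomial : g₂ = monomial (bideg 0 9) 1 + monomial (bideg 6 5) (3 / 5 : ℂ) := by
  rw [g₂, monomial_bideg, monomial_bideg, one_smul, pow_zero, one_mul]

lemma g₃_eq_monomial : g₃ = monomial (bideg 6 6) 1 := by
  rw [g₃, monomial_bideg, one_smul]

lemma normalCoeff_mul_eq_zero {p : ℕ × ℕ} (hp : p ∈ standardExponents)
    (u : MvPowerSeries (Fin 2) ℂ) {g : MvPowerSeries (Fin 2) ℂ} (hg : g ∈ ({g₁, g₂, g₃} : Set _)) :
    normalCoeff p (u * g) = 0 := by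
  obtain ⟨a, b⟩ := p
  simp only [mem_standardExponents] at hp
  simp only [normalCoeff]
  rcases hg with rfl | rfl | rfl <;> split_ifs with h₁ h₂ <;>
  · simp only [g₁_eq_monomial, g₂_eq_monomial, g₃_eq_monomial, mul_add, LinearMap.sub_apply,
      LinearMap.smul_apply, map_add, coeff_bideg_mul_monomial, Nat.reduceSub, Nat.sub_zero, smul_eq_mul]
    split_ifs <;> first | ring1 | (exfalso; omega)

lemma normalCoeff_eq_zero_of_mem {p : ℕ × ℕ} (hp : p ∈ standardExponents)
    {g : MvPowerSeries (Fin 2) ℂ} (hg : g ∈ tjurinaIdeal f) : normalCoeff p g = 0 := by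
  rw [tjurinaIdeal_f] at hg
  suffices ∀ u, normalCoeff p (u * g) = 0 by simpa using this 1
  induction hg using Submodule.span_induction with
  | mem g hg => exact fun u => normalCoeff_mul_eq_zero hp u hg
  | zero => simp
  | add g h _ _ hg hh => intro u; rw [mul_add, map_add, hg, hh, add_zero]
  | smul r g _ hg => intro u; rw [smul_eq_mul, ← mul_assoc]; exact hg _

lemma normalCoeff_X_pow_mul_X_pow {p q : ℕ × ℕ} (hp : p ∈ standardExponents)
    (hq : q ∈ standardExponents) :
    normalCoeff p (X 0 ^ q.1 * X 1 ^ q.2) = if p = q then 1 else 0 := by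
  obtain ⟨a, b⟩ := p
  obtain ⟨c, d⟩ := q
  simp only [mem_standardExponents] at hp hq
  rw [← one_smul ℂ (X 0 ^ _ * X 1 ^ _), ← monomial_bideg]
  simp only [normalCoeff, Prod.mk.injEq]
  split_ifs <;>
    simp only [LinearMap.sub_apply, LinearMap.smul_apply, coeff_monomial, bideg_inj,
      smul_eq_mul] <;>
    split_ifs <;> first | (exfalso; omega) | norm_num

end X11Y10X6Y6

/-- The Tjurina number of `f = x^11 + y^10 + x^6 y^6` at the origin equals 78:
`dim_ℂ ℂ⟦x,y⟧/(f, ∂f/∂x, ∂f/∂y) = 78`. -/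
theorem tjurina_example_x11_y10_x6y6 :
    tjurina ((MvPowerSeries.X 0) ^ 11 + (MvPowerSeries.X 1) ^ 10
      + (MvPowerSeries.X 0) ^ 6 * (MvPowerSeries.X 1) ^ 6 : MvPowerSeries (Fin 2) ℂ)
      = 78 := by
  rw [← X11Y10X6Y6.card_standardExponents, ← Fintype.card_coe]
  exact Ideal.finrank_quotient_eq_card_of_dual _
    (fun p : X11Y10X6Y6.standardExponents => X 0 ^ p.1.1 * X 1 ^ p.1.2)
    (fun p => X11Y10X6Y6.normalCoeff p) X11Y10X6Y6.mk_mem_span_standard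
    (fun p _ => X11Y10X6Y6.normalCoeff_eq_zero_of_mem p.2)
    (fun p q => (X11Y10X6Y6.normalCoeff_X_pow_mul_X_pow p.2 q.2).trans
      (if_congr Subtype.ext_iff.symm rfl rfl))
end
end
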